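/- arXiv:1708.03652 — 2 statements merged into one kernel-verified Lean document; each statement's English description precedes it below -/
import Mathlib

section
/- Let p be a prime with p ≡ 5 (mod 6) and let k be a field of characteristic p. In k[X₁,X₂,X₃,X₄], let κ = X₂²X₄² − 4X₁X₃X₄² + 4X₁³X₄ − 4X₃³X₄ + 4X₁²X₃² − 8X₁X₂²X₃ + 4X₂⁴. Then the coefficient of X₁^{p−2}X₃^{2p−1}X₄^{p−1} in κ^{p−1} equals −4^{2p−2} in k, and the coefficient of X₁^{2p−1}X₃^{p−2}X₄^{p−1} in κ^{p−1} also equals −4^{2p−2} in k. -/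
/-!
Modulo `X₂`, `κ ≡ 4 (X₁² − X₃X₄)(X₃² + X₁X₄)`, so the coefficient in `κⁿ` of a monomial free of
`X₂` can be read off from the binomial expansions of `(X₁² − X₃X₄)ⁿ` and `(X₃² + X₁X₄)ⁿ`; the
exponent vector of the `(i, j)`-th term determines `(i, j)`. For `n = p − 1` and the two monomials
in question exactly one term contributes, and it equals `−1` in characteristic `p`, because
`C(p − 1, i) ≡ (−1)ⁱ` and `4^(p−1) ≡ 1 (mod p)`.
-/

open MvPolynomial

noncomputable section Stmt4

/-- Exponent vector `(i₁,i₂,i₃,i₄)` for the variables `X₁,X₂,X₃,X₄`. -/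
def expv (i1 i2 i3 i4 : ℕ) : Fin 4 →₀ ℕ := Finsupp.equivFunOnFinite.symm ![i1, i2, i3, i4]

variable (k : Type*) [Field k]

/-- The Kummer quartic surface `κ` of the genus-2 curve `z² = x⁶ − 1`, in the variables
`X₁ = X 0, X₂ = X 1, X₃ = X 2, X₄ = X 3` over `k`. -/
def kappaK : MvPolynomial (Fin 4) k :=
  X 1 ^ 2 * X 3 ^ 2 - 4 * X 0 * X 2 * X 3 ^ 2 + 4 * X 0 ^ 3 * X 3 - 4 * X 2 ^ 3 * X 3
    + 4 * X 0 ^ 2 * X 2 ^ 2 - 8 * X 0 * X 1 ^ 2 * X 2 + 4 * X 1 ^ 4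

open Finset

theorem MvPolynomial.coeff_pow_eq_of_X_dvd_sub {σ R : Type*} [CommRing R]
    {f g : MvPolynomial σ R} {i : σ} (hfg : X i ∣ f - g) {m : σ →₀ ℕ} (hm : m i = 0) (n : ℕ) :
    coeff m (f ^ n) = coeff m (g ^ n) := by
  classical
  obtain ⟨h, hh⟩ := hfg.trans (sub_dvd_pow_sub_pow f g n)
  rw [← sub_eq_zero, ← coeff_sub, hh, coeff_X_mul']
  simp [hm]

theorem MvPolynomial.coeff_sum_monomial_of_injOn {σ R ι : Type*} [CommSemiring R]
    {s : Finset ι} {e : ι → σ →₀ ℕ} (he : Set.InjOn e s) (c : ι → R) {x : ι} (hx : x ∈ s) :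
    coeff (e x) (∑ y ∈ s, monomial (e y) (c y)) = c x := by
  classical
  rw [coeff_sum, sum_eq_single_of_mem x hx fun y hy hyx => ?_, coeff_monomial, if_pos rfl]
  rw [coeff_monomial, if_neg fun h => hyx (he hy hx h)]

theorem expv_inj {a b c d a' b' c' d' : ℕ} :
    expv a b c d = expv a' b' c' d' ↔ a = a' ∧ b = b' ∧ c = c' ∧ d = d' := by
  simp [expv]

theorem monomial_expv (a b c d : ℕ) (r : k) :
    monomial (expv a b c d) r = C r * X 0 ^ a * X 1 ^ b * X 2 ^ c * X 3 ^ d := by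
  simp [monomial_eq, expv, Finsupp.prod_fintype, Fin.prod_univ_four, mul_assoc]

def kummerExp (n : ℕ) (ij : ℕ × ℕ) : Fin 4 →₀ ℕ :=
  expv (2 * ij.1 + (n - ij.2)) 0 ((n - ij.1) + 2 * ij.2) ((n - ij.1) + (n - ij.2))

theorem kummerExp_injOn (n : ℕ) : Set.InjOn (kummerExp n) ↑(range (n + 1) ×ˢ range (n + 1)) := by
  rintro ⟨i, j⟩ hij ⟨i', j'⟩ hij' h
  simp only [coe_product, coe_range, Set.mem_prod, Set.mem_Iio] at hij hij'
  simp only [kummerExp, expv_inj] at h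
  ext <;> omega

theorem kappaK_sub_eq_X_mul : kappaK k - 4 * ((X 0 ^ 2 - X 2 * X 3) * (X 2 ^ 2 + X 0 * X 3)) =
    X 1 * (X 1 * (X 3 ^ 2 - 8 * X 0 * X 2 + 4 * X 1 ^ 2)) := by
  unfold kappaK; ring

theorem pow_eq_sum_monomial_kummerExp (n : ℕ) :
    ((X 0 ^ 2 - X 2 * X 3) * (X 2 ^ 2 + X 0 * X 3) : MvPolynomial (Fin 4) k) ^ n =
      ∑ ij ∈ range (n + 1) ×ˢ range (n + 1),
        monomial (kummerExp n ij) ((-1 : k) ^ (n - ij.1) * n.choose ij.1 * n.choose ij.2) := by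
  rw [mul_pow, sub_eq_add_neg, add_pow, add_pow, sum_mul_sum, ← sum_product']
  refine sum_congr rfl fun ⟨i, j⟩ _ => ?_
  rw [kummerExp, monomial_expv, neg_pow]
  simp only [map_mul, map_pow, map_neg, map_one, map_natCast]
  ring

theorem coeff_kappaK_pow_kummerExp {n i j : ℕ} (hi : i ≤ n) (hj : j ≤ n) :
    coeff (kummerExp n (i, j)) (kappaK k ^ n) =
      4 ^ n * ((-1) ^ (n - i) * n.choose i * n.choose j) := by
  have hX₂ : kummerExp n (i, j) 1 = 0 := by simp [kummerExp, expv]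
  have hij : (i, j) ∈ range (n + 1) ×ˢ range (n + 1) := by
    simp only [mem_product, mem_range]; omega
  rw [coeff_pow_eq_of_X_dvd_sub ⟨_, kappaK_sub_eq_X_mul k⟩ hX₂, mul_pow, ← map_ofNat C 4,
    ← map_pow, coeff_C_mul, pow_eq_sum_monomial_kummerExp,
    coeff_sum_monomial_of_injOn (kummerExp_injOn n) _ hij]

section CharP

variable {R : Type*} [CommRing R] {p : ℕ} [Fact p.Prime] [CharP R p]

theorem natCast_pow_pred_prime {n : ℕ} (hn : n.Coprime p) : (n : R) ^ (p - 1) = 1 := by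
  exact_mod_cast (CharP.natCast_eq_natCast R p).mpr (Nat.ModEq.pow_card_sub_one_eq_one Fact.out hn)

theorem four_pow_pred_prime (hp : p ≠ 2) : (4 : R) ^ (p - 1) = 1 := by
  have h2p : Nat.Coprime 2 p := (Nat.coprime_primes Nat.prime_two Fact.out).mpr hp.symm
  exact_mod_cast natCast_pow_pred_prime (n := 4) (h2p.pow_left 2)

theorem cast_choose_pred_prime {i : ℕ} (hi : i ≤ p - 1) : ((p - 1).choose i : R) = (-1) ^ i := by
  induction i with
  | zero => simp
  | succ i ih =>
    have hpas : (p.choose (i + 1) : R) = (p - 1).choose i + (p - 1).choose (i + 1) := by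
      rw [← Nat.cast_add, ← Nat.choose_succ_succ', Nat.sub_add_cancel (Fact.out : p.Prime).pos]
    have hp : (p.choose (i + 1) : R) = 0 := (CharP.cast_eq_zero_iff R p _).mpr
      ((Fact.out : p.Prime).dvd_choose_self i.succ_ne_zero (by omega))
    rw [hp, ih (by omega)] at hpas
    linear_combination -hpas

end CharP

theorem coeff_kappaK_pow_pred_kummerExp {p : ℕ} [Fact p.Prime] [CharP k p] (hp : Odd p) {i j : ℕ}
    (hij : i + j = p - 1) (hj : Odd j) :
    coeff (kummerExp (p - 1) (i, j)) (kappaK k ^ (p - 1)) = -1 := by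
  have h4 : (4 : k) ^ (p - 1) = 1 := four_pow_pred_prime (by rintro rfl; norm_num at hp)
  have hpj : p - 1 - i = j := by omega
  rw [coeff_kappaK_pow_kummerExp k (by omega) (by omega), h4, hpj,
    cast_choose_pred_prime (by omega), cast_choose_pred_prime (by omega), one_mul, ← pow_add,
    ← pow_add, add_comm j i, hij]
  exact Odd.neg_one_pow ((Nat.Odd.sub_odd hp odd_one).add_odd hj)

/-- For `p ≡ 5 (mod 6)` prime and `k` of characteristic `p`, the
coefficients of `X₁^{p−2}X₃^{2p−1}X₄^{p−1}` and of `X₁^{2p−1}X₃^{p−2}X₄^{p−1}` in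
`κ^{p−1}` both equal `−4^{2p−2}` in `k`. -/
theorem stmt4 (p : ℕ) (hp : p.Prime) (hp5 : p % 6 = 5) [CharP k p] :
    coeff (expv (p - 2) 0 (2 * p - 1) (p - 1)) ((kappaK k) ^ (p - 1)) =
      -((4 : k) ^ (2 * p - 2)) ∧
    coeff (expv (2 * p - 1) 0 (p - 2) (p - 1)) ((kappaK k) ^ (p - 1)) =
      -((4 : k) ^ (2 * p - 2)) := by
  have := Fact.mk hp
  obtain ⟨q, hq⟩ : ∃ q, p = 6 * q + 5 := ⟨p / 6, by omega⟩
  have hodd : Odd p := ⟨3 * q + 2, by omega⟩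
  have hrhs : -((4 : k) ^ (2 * p - 2)) = -1 := by
    rw [show 2 * p - 2 = (p - 1) * 2 by omega, pow_mul, four_pow_pred_prime (by omega), one_pow]
  have hexp₁ : expv (p - 2) 0 (2 * p - 1) (p - 1) = kummerExp (p - 1) (2 * q + 1, 4 * q + 3) := by
    rw [kummerExp, expv_inj]; omega
  have hexp₂ : expv (2 * p - 1) 0 (p - 2) (p - 1) = kummerExp (p - 1) (4 * q + 3, 2 * q + 1) := by
    rw [kummerExp, expv_inj]; omega
  rw [hrhs, hexp₁, hexp₂]
  exact ⟨coeff_kappaK_pow_pred_kummerExp k hodd (by omega) ⟨2 * q + 1, by ring⟩,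
    coeff_kappaK_pow_pred_kummerExp k hodd (by omega) ⟨q, by ring⟩⟩

end Stmt4
end

section
/- Let p be an odd prime with p ≡ 5 (mod 6) and let k be a field of characteristic p. In k[X₁,X₂,X₃,X₄], let κ = X₂²X₄² − 4X₁X₃X₄² + 4X₁³X₄ − 4X₃³X₄ + 4X₁²X₃² − 8X₁X₂²X₃ + 4X₂⁴, and let v = aX₁ + bX₂ + cX₃ + X₄ over R = k[a,b,c]. Then: (1) the coefficient of X₁^{p−1}X₃^{p−1}X₄^{2p−2} in κ^{p−1} equals (−4)^{p−1} in k; and (2) the coefficient c_{p−1,p−2,p−1,2p−1} of X₁^{p−1}X₂^{p−2}X₃^{p−1}X₄^{2p−1} in (vκ)^{p−1}, regarded as a polynomial in the variable b, has degree exactly p−2, with the coefficient of b^{p−2} equal to (p−1)(−4)^{p−1} = −(−4)^{p−1} ≠ 0 in k. -/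
/-!
Give `X₁, X₂, X₃, X₄` the weights `1, 2, 1, 0`. Every monomial of `κ` has weight at least `2`, and
`−4 X₁X₃X₄²` is the only one of weight exactly `2`; hence every monomial of `κⁿ` has weight at least
`2n`, the only one of weight `2n` being `(−4)ⁿ X₁ⁿX₃ⁿX₄²ⁿ`. This is part (1) for `n = p − 1`.

The coefficient of `X^u` in `vⁿ` is the multinomial coefficient of `u` times `a^{u₁} b^{u₂} c^{u₃}`.
The monomial `X₁ⁿX₂ⁿ⁻¹X₃ⁿX₄²ⁿ⁺¹` has weight `4n − 2`, so in `(vκ)ⁿ = vⁿκⁿ` the factor taken from `vⁿ`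
has weight `u₁ + 2u₂ + u₃ ≤ 2n − 2`. Thus the exponent of `b` is at most `n − 1`, and equality forces
the factor from `κⁿ` to be its lowest term and the one from `vⁿ` to be `n bⁿ⁻¹ X₂ⁿ⁻¹X₄`. The top
coefficient in `b` is therefore `n (−4)ⁿ`, which for `n = p − 1` is `−(−4)^{p−1} ≠ 0` since `p ∤ 4`.
-/

open MvPolynomial

noncomputable section Stmt5

variable (k : Type*) [Field k]

/-- The same Kummer surface `κ`, over `R = k[a,b,c]` (with `a = X 0, b = X 1, c = X 2`). -/
def kappaR : MvPolynomial (Fin 4) (MvPolynomial (Fin 3) k) :=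
  X 1 ^ 2 * X 3 ^ 2 - 4 * X 0 * X 2 * X 3 ^ 2 + 4 * X 0 ^ 3 * X 3 - 4 * X 2 ^ 3 * X 3
    + 4 * X 0 ^ 2 * X 2 ^ 2 - 8 * X 0 * X 1 ^ 2 * X 2 + 4 * X 1 ^ 4

/-- The plane `v = a X₁ + b X₂ + c X₃ + X₄` over `R = k[a,b,c]`. -/
def vpl : MvPolynomial (Fin 4) (MvPolynomial (Fin 3) k) :=
  C (X 0) * X 0 + C (X 1) * X 1 + C (X 2) * X 2 + X 3

/-- `c_{i₁,i₂,i₃,i₄} ∈ R = k[a,b,c]`: the coefficient of `X₁^{i₁}X₂^{i₂}X₃^{i₃}X₄^{i₄}`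
in `(vκ)^{p−1}`. -/
def cc (p i1 i2 i3 i4 : ℕ) : MvPolynomial (Fin 3) k :=
  coeff (expv i1 i2 i3 i4) ((vpl k * kappaR k) ^ (p - 1))

namespace MvPolynomial

variable {σ R : Type*} [CommSemiring R] (w : σ → ℕ)

def IsLowestWeightMonomial (d₀ : σ →₀ ℕ) (f : MvPolynomial σ R) : Prop :=
  ∀ d ∈ f.support, d ≠ d₀ → Finsupp.weight w d₀ < Finsupp.weight w d

namespace IsLowestWeightMonomial

variable {w} {d₀ e₀ : σ →₀ ℕ} {f g : MvPolynomial σ R}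

theorem weight_le (hf : IsLowestWeightMonomial w d₀ f) {d : σ →₀ ℕ} (hd : d ∈ f.support) :
    Finsupp.weight w d₀ ≤ Finsupp.weight w d := by
  rcases eq_or_ne d d₀ with rfl | hne
  · exact le_rfl
  · exact (hf d hd hne).le

theorem eq_of_weight_le (hf : IsLowestWeightMonomial w d₀ f) {d : σ →₀ ℕ} (hd : d ∈ f.support)
    (hw : Finsupp.weight w d ≤ Finsupp.weight w d₀) : d = d₀ := by
  by_contra hne
  exact (hf d hd hne).not_ge hw

theorem mul (hf : IsLowestWeightMonomial w d₀ f) (hg : IsLowestWeightMonomial w e₀ g) :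
    IsLowestWeightMonomial w (d₀ + e₀) (f * g) := by
  classical
  intro d hd hne
  obtain ⟨a, ha, b, hb, rfl⟩ := Finset.mem_add.mp (support_mul f g hd)
  have hab : a ≠ d₀ ∨ b ≠ e₀ := by
    by_contra! h
    exact hne (h.1 ▸ h.2 ▸ rfl)
  rw [map_add, map_add]
  rcases hab with h | h
  · linarith [hf a ha h, hg.weight_le hb]
  · linarith [hf.weight_le ha, hg b hb h]

theorem coeff_mul (hf : IsLowestWeightMonomial w d₀ f) (hg : IsLowestWeightMonomial w e₀ g) :
    coeff (d₀ + e₀) (f * g) = coeff d₀ f * coeff e₀ g := by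
  classical
  rw [MvPolynomial.coeff_mul, Finset.sum_eq_single_of_mem (d₀, e₀) (by simp)]
  rintro ⟨a, b⟩ hab hne
  rw [Finset.HasAntidiagonal.mem_antidiagonal] at hab
  by_contra h
  have ha : a ∈ f.support := mem_support_iff.mpr (left_ne_zero_of_mul h)
  have hb : b ∈ g.support := mem_support_iff.mpr (right_ne_zero_of_mul h)
  have hw : Finsupp.weight w a + Finsupp.weight w b
      = Finsupp.weight w d₀ + Finsupp.weight w e₀ := by
    rw [← map_add, ← map_add, hab]
  have h₁ := hf.weight_le ha
  have h₂ := hg.weight_le hb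
  rw [hf.eq_of_weight_le ha (by omega), hg.eq_of_weight_le hb (by omega)] at hne
  exact hne rfl

theorem pow (hf : IsLowestWeightMonomial w d₀ f) (n : ℕ) :
    IsLowestWeightMonomial w (n • d₀) (f ^ n) := by
  induction n with
  | zero =>
    classical
    intro d hd hne
    rw [pow_zero, mem_support_iff, coeff_one] at hd
    simp_all
  | succ n ih => rw [pow_succ, succ_nsmul]; exact ih.mul hf

theorem coeff_pow (hf : IsLowestWeightMonomial w d₀ f) (n : ℕ) :
    coeff (n • d₀) (f ^ n) = coeff d₀ f ^ n := by
  induction n with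
  | zero => simp
  | succ n ih => rw [pow_succ, succ_nsmul, (hf.pow n).coeff_mul hf, ih, pow_succ]

end IsLowestWeightMonomial

theorem degreeOf_eq_of_coeff_eq_ite [DecidableEq σ] {f : MvPolynomial σ R} {i : σ} {d : ℕ} {r : R}
    (hr : r ≠ 0)
    (hf : ∀ m : σ →₀ ℕ, d ≤ m i → coeff m f = if m = Finsupp.single i d then r else 0) :
    degreeOf i f = d := by
  apply le_antisymm
  · rw [degreeOf_le_iff]
    intro m hm
    by_contra! h
    rw [mem_support_iff, hf m h.le, if_neg] at hm
    · exact hm rfl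
    · rintro rfl
      simp at h
  · have hd := hf (Finsupp.single i d) (by simp)
    rw [if_pos rfl] at hd
    have := monomial_le_degreeOf i (mem_support_iff.mpr (hd ▸ hr))
    rwa [Finsupp.single_eq_same] at this

end MvPolynomial

section expv

variable (i1 i2 i3 i4 : ℕ)

@[simp] lemma expv_apply_zero : expv i1 i2 i3 i4 0 = i1 := rfl
@[simp] lemma expv_apply_one : expv i1 i2 i3 i4 1 = i2 := rfl
@[simp] lemma expv_apply_two : expv i1 i2 i3 i4 2 = i3 := rfl
@[simp] lemma expv_apply_three : expv i1 i2 i3 i4 3 = i4 := rfl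

end expv

lemma expv_eq_iff {i1 i2 i3 i4 : ℕ} {u : Fin 4 →₀ ℕ} :
    expv i1 i2 i3 i4 = u ↔ i1 = u 0 ∧ i2 = u 1 ∧ i3 = u 2 ∧ i4 = u 3 := by
  simp [Finsupp.ext_iff, Fin.forall_fin_succ, eq_comm]

lemma expv_add (i1 i2 i3 i4 j1 j2 j3 j4 : ℕ) :
    expv i1 i2 i3 i4 + expv j1 j2 j3 j4 = expv (i1 + j1) (i2 + j2) (i3 + j3) (i4 + j4) := by
  ext j; fin_cases j <;> rfl

lemma nsmul_expv (n i1 i2 i3 i4 : ℕ) :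
    n • expv i1 i2 i3 i4 = expv (n * i1) (n * i2) (n * i3) (n * i4) := by
  ext j; fin_cases j <;> rfl

lemma monomial_expv_s5 {R : Type*} [CommSemiring R] (i1 i2 i3 i4 : ℕ) (r : R) :
    monomial (expv i1 i2 i3 i4) r = C r * (X 0 ^ i1 * X 1 ^ i2 * X 2 ^ i3 * X 3 ^ i4) := by
  rw [monomial_eq, Finsupp.prod_fintype _ _ fun _ => pow_zero _, Fin.prod_univ_four]
  simp [mul_assoc]

def kummerWeight : Fin 4 → ℕ := ![1, 2, 1, 0]

lemma weight_kummerWeight (u : Fin 4 →₀ ℕ) :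
    Finsupp.weight kummerWeight u = u 0 + 2 * u 1 + u 2 := by
  rw [Finsupp.weight_apply, Finsupp.sum_fintype _ _ (by simp), Fin.sum_univ_four]
  simp [kummerWeight, mul_comm]

lemma kappaK_eq_sum_monomial : kappaK k =
    monomial (expv 0 2 0 2) 1 + monomial (expv 1 0 1 2) (-4) + monomial (expv 3 0 0 1) 4
      + monomial (expv 0 0 3 1) (-4) + monomial (expv 2 0 2 0) 4
      + monomial (expv 1 2 1 0) (-8) + monomial (expv 0 4 0 0) 4 := by
  simp only [kappaK, monomial_expv_s5, map_neg, map_ofNat, map_one]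
  ring

lemma isLowestWeightMonomial_kappaK :
    IsLowestWeightMonomial kummerWeight (expv 1 0 1 2) (kappaK k) := by
  intro u hu hne
  simp only [weight_kummerWeight, expv_apply_zero, expv_apply_one, expv_apply_two]
  by_contra! hw
  have key : ∀ i1 i2 i3 i4, 3 ≤ i1 + 2 * i2 + i3 → expv i1 i2 i3 i4 ≠ u := by
    intro i1 i2 i3 i4 h heq
    rw [expv_eq_iff] at heq
    omega
  rw [kappaK_eq_sum_monomial, mem_support_iff] at hu
  simp [coeff_monomial, key, hne.symm] at hu

lemma vpl_eq_sum_smul_X :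
    vpl k = ∑ i, (![X 0, X 1, X 2, 1] : Fin 4 → MvPolynomial (Fin 3) k) i • X i := by
  simp [vpl, Fin.sum_univ_four, smul_eq_C_mul]

lemma coeff_vpl_pow (n : ℕ) (u : Fin 4 →₀ ℕ) :
    coeff u (vpl k ^ n) = if u.sum (fun _ e ↦ e) = n then
      monomial (Finsupp.single 0 (u 0) + Finsupp.single 1 (u 1) + Finsupp.single 2 (u 2))
        (u.multinomial : k) else 0 := by
  rw [vpl_eq_sum_smul_X, coeff_linearCombination_X_pow_of_fintype]
  congr 1
  rw [Finsupp.prod_fintype _ _ fun _ => pow_zero _, Fin.prod_univ_four]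
  simp only [Matrix.cons_val, one_pow, mul_one, X_pow_eq_monomial, monomial_mul]
  rw [← map_natCast C, C_mul_monomial, mul_one]

lemma multinomial_expv_pred (n : ℕ) (hn : 1 ≤ n) : (expv 0 (n - 1) 0 1).multinomial = n := by
  have h := Nat.multinomial_spec Finset.univ (expv 0 (n - 1) 0 1)
  rw [Finsupp.multinomial_of_support_subset (Finset.subset_univ _)] at h
  simp only [Fin.prod_univ_four, Fin.sum_univ_four, expv_apply_zero, expv_apply_one,
    expv_apply_two, expv_apply_three, Nat.factorial_zero, Nat.factorial_one, one_mul, mul_one,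
    zero_add, add_zero, Nat.sub_add_cancel hn] at h
  rw [← Nat.mul_factorial_pred (n := n) (by omega), mul_comm n] at h
  exact Nat.eq_of_mul_eq_mul_left (Nat.factorial_pos _) h

lemma eq_of_coeff_coeff_vpl_pow_ne_zero {n : ℕ} {u : Fin 4 →₀ ℕ} {m : Fin 3 →₀ ℕ}
    (h : coeff m (coeff u (vpl k ^ n)) ≠ 0) : m 0 = u 0 ∧ m 1 = u 1 ∧ m 2 = u 2 := by
  rw [coeff_vpl_pow] at h
  split_ifs at h
  · rw [coeff_monomial] at h
    split_ifs at h with hm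
    · subst hm; simp
    · exact absurd rfl h
  · exact absurd rfl h

lemma coeff_coeff_vpl_pow_expv (n : ℕ) (hn : 1 ≤ n) (m : Fin 3 →₀ ℕ) :
    coeff m (coeff (expv 0 (n - 1) 0 1) (vpl k ^ n)) =
      if m = Finsupp.single 1 (n - 1) then (n : k) else 0 := by
  rw [coeff_vpl_pow, if_pos, coeff_monomial, multinomial_expv_pred n hn]
  · simp [eq_comm]
  · rw [Finsupp.sum_fintype _ _ fun _ => rfl, Fin.sum_univ_four]
    simp only [expv_apply_zero, expv_apply_one, expv_apply_two, expv_apply_three]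
    omega

lemma isLowestWeightMonomial_kappaK_pow (n : ℕ) :
    IsLowestWeightMonomial kummerWeight (expv n 0 n (2 * n)) (kappaK k ^ n) := by
  simpa [nsmul_expv, mul_comm] using (isLowestWeightMonomial_kappaK k).pow n

lemma coeff_kappaK_pow (n : ℕ) : coeff (expv n 0 n (2 * n)) (kappaK k ^ n) = (-4) ^ n := by
  have h := (isLowestWeightMonomial_kappaK k).coeff_pow n
  rw [nsmul_expv] at h
  simpa [mul_comm, kappaK_eq_sum_monomial, coeff_monomial, expv_eq_iff] using h

lemma coeff_coeff_vpl_mul_kappaR_pow_eq_sum (n : ℕ) (μ : Fin 4 →₀ ℕ) (m : Fin 3 →₀ ℕ) :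
    coeff m (coeff μ ((vpl k * kappaR k) ^ n)) = ∑ x ∈ Finset.HasAntidiagonal.antidiagonal μ,
      coeff m (coeff x.1 (vpl k ^ n)) * coeff x.2 (kappaK k ^ n) := by
  have hκ : kappaR k = map C (kappaK k) := by simp [kappaK, kappaR]
  rw [mul_pow, coeff_mul, coeff_sum, hκ, ← map_pow]
  refine Finset.sum_congr rfl fun x _ ↦ ?_
  rw [coeff_map, mul_comm, coeff_C_mul, mul_comm]

lemma eq_of_coeff_vpl_pow_mul_coeff_kappaK_pow_ne_zero {n : ℕ} {u w : Fin 4 →₀ ℕ}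
    {m : Fin 3 →₀ ℕ} (huw : u + w = expv n (n - 1) n (2 * n + 1)) (hm : n - 1 ≤ m 1)
    (h : coeff m (coeff u (vpl k ^ n)) * coeff w (kappaK k ^ n) ≠ 0) :
    u = expv 0 (n - 1) 0 1 ∧ w = expv n 0 n (2 * n) := by
  have hμ (i : Fin 4) : u i + w i = expv n (n - 1) n (2 * n + 1) i := by
    rw [← Finsupp.add_apply, huw]
  have hμ0 := hμ 0
  have hμ1 := hμ 1
  have hμ2 := hμ 2
  have hμ3 := hμ 3
  simp only [expv_apply_zero, expv_apply_one, expv_apply_two, expv_apply_three]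
    at hμ0 hμ1 hμ2 hμ3
  obtain ⟨-, hmu, -⟩ := eq_of_coeff_coeff_vpl_pow_ne_zero k (left_ne_zero_of_mul h)
  have hw : w ∈ (kappaK k ^ n).support := mem_support_iff.mpr (right_ne_zero_of_mul h)
  have hκ := isLowestWeightMonomial_kappaK_pow k n
  have hwt := hκ.weight_le hw
  obtain rfl : w = expv n 0 n (2 * n) := hκ.eq_of_weight_le hw (by
    simp only [weight_kummerWeight, expv_apply_zero, expv_apply_one, expv_apply_two] at hwt ⊢
    omega)
  refine ⟨?_, rfl⟩
  simp only [expv_apply_zero, expv_apply_one, expv_apply_two, expv_apply_three] at hμ0 hμ1 hμ2 hμ3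
  rw [eq_comm, expv_eq_iff]
  omega

lemma coeff_coeff_vpl_mul_kappaR_pow (n : ℕ) (hn : 1 ≤ n) (m : Fin 3 →₀ ℕ) (hm : n - 1 ≤ m 1) :
    coeff m (coeff (expv n (n - 1) n (2 * n + 1)) ((vpl k * kappaR k) ^ n)) =
      if m = Finsupp.single 1 (n - 1) then (n : k) * (-4) ^ n else 0 := by
  rw [coeff_coeff_vpl_mul_kappaR_pow_eq_sum,
    Finset.sum_eq_single_of_mem (expv 0 (n - 1) 0 1, expv n 0 n (2 * n))]
  · rw [coeff_coeff_vpl_pow_expv k n hn, coeff_kappaK_pow, ite_mul, zero_mul]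
  · rw [Finset.HasAntidiagonal.mem_antidiagonal, expv_add, expv_eq_iff]
    simp only [expv_apply_zero, expv_apply_one, expv_apply_two, expv_apply_three]
    omega
  rintro ⟨u, w⟩ huw hne
  rw [Finset.HasAntidiagonal.mem_antidiagonal] at huw
  by_contra h
  exact hne (Prod.ext_iff.mpr (eq_of_coeff_vpl_pow_mul_coeff_kappaK_pow_ne_zero k huw hm h))

theorem stmt5 (p : ℕ) (hp5 : p % 6 = 5) [CharP k p] :
    coeff (expv (p - 1) 0 (p - 1) (2 * p - 2)) ((kappaK k) ^ (p - 1)) = (-4 : k) ^ (p - 1) ∧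
    MvPolynomial.degreeOf (1 : Fin 3) (cc k p (p - 1) (p - 2) (p - 1) (2 * p - 1)) = p - 2 ∧
    (∀ m : Fin 3 →₀ ℕ, m 1 = p - 2 →
      coeff m (cc k p (p - 1) (p - 2) (p - 1) (2 * p - 1)) =
        if m = Finsupp.single 1 (p - 2) then ((p : k) - 1) * (-4 : k) ^ (p - 1) else 0) ∧
    ((p : k) - 1) * (-4 : k) ^ (p - 1) = -((-4 : k) ^ (p - 1)) ∧
    ((p : k) - 1) * (-4 : k) ^ (p - 1) ≠ 0 := by
  have hcoeff (m : Fin 3 →₀ ℕ) (hm : p - 2 ≤ m 1) :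
      coeff m (cc k p (p - 1) (p - 2) (p - 1) (2 * p - 1)) =
        if m = Finsupp.single 1 (p - 2) then ((p : k) - 1) * (-4 : k) ^ (p - 1) else 0 := by
    have h := coeff_coeff_vpl_mul_kappaR_pow k (p - 1) (by omega) m (by omega)
    rwa [show p - 1 - 1 = p - 2 by omega, show 2 * (p - 1) + 1 = 2 * p - 1 by omega,
      Nat.cast_pred (by omega)] at h
  have hval : ((p : k) - 1) * (-4) ^ (p - 1) = -((-4 : k) ^ (p - 1)) := by
    rw [CharP.cast_eq_zero k p]; ring
  have hfour : (4 : k) ≠ 0 := by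
    exact_mod_cast (CharP.cast_eq_zero_iff k p 4).not.mpr
      (Nat.not_dvd_of_pos_of_lt (by norm_num) (by omega))
  have hne : ((p : k) - 1) * (-4) ^ (p - 1) ≠ 0 := by
    rw [hval, neg_ne_zero]
    exact pow_ne_zero _ (neg_ne_zero.mpr hfour)
  refine ⟨?_, degreeOf_eq_of_coeff_eq_ite hne hcoeff, fun m hm ↦ hcoeff m hm.ge, hval, hne⟩
  rw [show 2 * p - 2 = 2 * (p - 1) by omega]
  exact coeff_kappaK_pow k (p - 1)

end Stmt5
end
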